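/- arXiv:1611.07303 — 4 statements merged into one kernel-verified Lean document; each statement's English description precedes it below -/
import Mathlib

section
/- Let a be a d-dimensional vector with i.i.d. N(0,1) entries, q a query point, p a point with ‖p−q‖₂ = r, and p' a point with ‖p'−q‖₂ < r/c for some c > 1. Set Δ = rt/c where t > 0 solves e^{t²/2} t^{c²} = n/(2π)^{c²/2}. Then P[a·(p'−q) ≥ Δ] ≤ P[a·(p−q) ≥ Δ · (‖p'−q‖₂ c / r)] and in particular P[a·(p'−q) ≥ Δ] ≤ P[X ≥ t] for X ~ N(0,1). -/
open MeasureTheory ProbabilityTheory Real RealInnerProductSpace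

/-!
Write `u = ‖p' - q‖`. Since `a·(p' - q) / u` and `a·(p - q) / r` are standard normal, both
probabilities are standard normal tails, at thresholds `t · r / (c u)` and `t · u / r`
respectively. As `c u < r` and `c ≥ 1`, we have `u / r ≤ r / (c u)` and `1 ≤ r / (c u)`,
and tails decrease in the threshold.
-/

theorem measure_setOf_le_eq_of_map_div {Ω : Type*} [MeasurableSpace Ω] {P : Measure Ω}
    {μ : Measure ℝ} [NeZero μ] {X : Ω → ℝ} {s : ℝ} (hs : 0 < s)
    (hX : P.map (fun ω => X ω / s) = μ) (b : ℝ) :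
    P {ω | b ≤ X ω} = μ (Set.Ici (b / s)) := by
  have hXm : AEMeasurable (fun ω => X ω / s) P :=
    .of_map_ne_zero (hX ▸ NeZero.ne μ)
  rw [← hX, Measure.map_apply_of_aemeasurable hXm measurableSet_Ici]
  congr 1
  ext ω
  exact (div_le_div_iff_of_pos_right hs).symm

theorem one_le_div_mul_of_mul_lt {c r u : ℝ} (hc : 0 < c) (hu : 0 < u) (hcu : c * u < r) :
    1 ≤ r / (c * u) :=
  (one_le_div (mul_pos hc hu)).mpr hcu.le

theorem div_le_div_mul_of_mul_lt {c r u : ℝ} (hc : 1 ≤ c) (hu : 0 < u) (hcu : c * u < r) :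
    u / r ≤ r / (c * u) := by
  have hcu0 : 0 < c * u := by positivity
  rw [div_le_div_iff₀ (hcu0.trans hcu) hcu0]
  nlinarith [mul_le_mul_of_nonneg_right hc (mul_pos hu hu).le]

theorem stmt_4_general {Ω : Type*} [MeasurableSpace Ω] (P : Measure Ω) [IsProbabilityMeasure P]
    (d : ℕ) (a : Ω → EuclideanSpace ℝ (Fin d)) (q p p' : EuclideanSpace ℝ (Fin d))
    (c r t : ℝ) (hc : 1 < c) (hr : 0 < r) (ht : 0 < t)
    (hp : ‖p - q‖ = r) (hp' : ‖p' - q‖ < r / c) (hp'q : p' ≠ q)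
    (hgauss_p : Measure.map (fun ω => ⟪a ω, p - q⟫ / ‖p - q‖) P = gaussianReal 0 1)
    (hgauss_p' : Measure.map (fun ω => ⟪a ω, p' - q⟫ / ‖p' - q‖) P = gaussianReal 0 1) :
    P {ω | r * t / c ≤ ⟪a ω, p' - q⟫}
        ≤ P {ω | (r * t / c) * (‖p' - q‖ * c / r) ≤ ⟪a ω, p - q⟫} ∧
      P {ω | r * t / c ≤ ⟪a ω, p' - q⟫} ≤ gaussianReal 0 1 {x | t ≤ x} := by
  have hc0 : 0 < c := one_pos.trans hc
  set u := ‖p' - q‖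
  have hu : 0 < u := norm_pos_iff.mpr (sub_ne_zero.mpr hp'q)
  have hcu : c * u < r := by rwa [lt_div_iff₀ hc0, mul_comm] at hp'
  rw [measure_setOf_le_eq_of_map_div hu hgauss_p', measure_setOf_le_eq_of_map_div (hp ▸ hr) hgauss_p, hp]
  have near_threshold : r * t / c / u = t * (r / (c * u)) := by field_simp
  have far_threshold : r * t / c * (u * c / r) / r = t * (u / r) := by field_simp
  rw [near_threshold, far_threshold]
  exact ⟨measure_mono <| Set.Ici_subset_Ici.mpr <|
      mul_le_mul_of_nonneg_left (div_le_div_mul_of_mul_lt hc.le hu hcu) ht.le,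
    measure_mono <| Set.Ici_subset_Ici.mpr <|
      le_mul_of_one_le_right ht.le (one_le_div_mul_of_mul_lt hc0 hu hcu)⟩

/-- With `Δ = rt/c`, for a random Gaussian vector `a`, a furthest neighbor `p` at distance
`r` and a near point `p'` with `‖p'−q‖ < r/c`:
`P[a·(p'−q) ≥ Δ] ≤ P[a·(p−q) ≥ Δ·(‖p'−q‖c/r)]` and `P[a·(p'−q) ≥ Δ] ≤ P[X ≥ t]`
for a standard normal `X`. -/
theorem stmt_4 {Ω : Type*} [MeasurableSpace Ω] (P : Measure Ω) [IsProbabilityMeasure P]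
    (d : ℕ) (a : Ω → EuclideanSpace ℝ (Fin d)) (q p p' : EuclideanSpace ℝ (Fin d))
    (c r t n : ℝ) (hc : 1 < c) (hr : 0 < r) (ht : 0 < t)
    (heq : Real.exp (t ^ 2 / 2) * t ^ (c ^ 2 : ℝ) = n / (2 * π) ^ ((c ^ 2 : ℝ) / 2))
    (hp : ‖p - q‖ = r) (hp' : ‖p' - q‖ < r / c) (hp'q : p' ≠ q)
    (hgauss_p : Measure.map (fun ω => ⟪a ω, p - q⟫ / ‖p - q‖) P = gaussianReal 0 1)
    (hgauss_p' : Measure.map (fun ω => ⟪a ω, p' - q⟫ / ‖p' - q‖) P = gaussianReal 0 1) :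
    P {ω | r * t / c ≤ ⟪a ω, p' - q⟫}
        ≤ P {ω | (r * t / c) * (‖p' - q‖ * c / r) ≤ ⟪a ω, p - q⟫} ∧
      P {ω | r * t / c ≤ ⟪a ω, p' - q⟫} ≤ gaussianReal 0 1 {x | t ≤ x} :=
  stmt_4_general P d a q p p' c r t hc hr ht hp hp' hp'q hgauss_p hgauss_p'
end

section
/- Let S ⊆ ℝ^d be a set of r points such that (1 − ε') ≤ ‖x‖₂² ≤ (1 + ε') for all x ∈ S and x · y ≤ 2ε' for all distinct x, y ∈ S, where ε' ∈ (0,1). Any data structure that answers c-approximate furthest neighbor queries on S by storing a subset T ⊆ S and returning the point of T furthest from the query must, if c < √2 · √((1 − ε')/(1 + 3ε')), store all r points: |T| ≥ r. -/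
open Real RealInnerProductSpace

/-- Suppose `S` consists of `r` near-orthonormal points, and a data structure answers
`c`-approximate furthest neighbor queries on `S` by storing a subset `T ⊆ S` and returning
the point of `T` furthest from the query. If `c < √2·√((1 − ε')/(1 + 3ε'))`, the data
structure must store all `r` points. -/
theorem stmt_14 (d r : ℕ) (ε' c : ℝ) (hε0 : 0 < ε') (hε1 : ε' < 1)
    (S T : Finset (EuclideanSpace ℝ (Fin d))) (hcard : S.card = r) (hTS : T ⊆ S)
    (hnorm : ∀ x ∈ S, 1 - ε' ≤ ‖x‖ ^ 2 ∧ ‖x‖ ^ 2 ≤ 1 + ε')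
    (hdot : ∀ x ∈ S, ∀ y ∈ S, x ≠ y → ⟪x, y⟫ ≤ 2 * ε')
    (hc : c < Real.sqrt 2 * Real.sqrt ((1 - ε') / (1 + 3 * ε')))
    (hanswer : ∀ q : EuclideanSpace ℝ (Fin d), ∃ z ∈ T,
      (∀ y ∈ T, ‖y - q‖ ≤ ‖z - q‖) ∧ ∀ x ∈ S, ‖x - q‖ ≤ c * ‖z - q‖) :
    r ≤ T.card := by
  have hd3 : (0:ℝ) < 1 + 3 * ε' := by linarith
  have hST : S ⊆ T := by
    intro x hx
    by_contra hxT
    obtain ⟨z, hzT, _, hfar⟩ := hanswer (-x)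
    have hzS := hTS hzT
    have hne : z ≠ x := fun h => hxT (h ▸ hzT)
    have hzx : ⟪z, x⟫ ≤ 2 * ε' := hdot z hzS x hx hne
    have hxq : ‖x - -x‖ = 2 * ‖x‖ := by
      have h2x : x - -x = (2:ℝ) • x := by module
      rw [h2x, norm_smul]; simp
    have hzq : ‖z - -x‖ ^ 2 ≤ 2 + 6 * ε' := by
      have hza : z - -x = z + x := by module
      rw [hza, norm_add_sq_real]
      have h1 := (hnorm z hzS).2
      have h2 := (hnorm x hx).2
      linarith
    have hle := hfar x hx
    rw [hxq] at hle
    have hx2 : 1 - ε' ≤ ‖x‖ ^ 2 := (hnorm x hx).1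
    have hxpos : 0 < ‖x‖ := by nlinarith [norm_nonneg x]
    have hcpos : 0 ≤ c := by nlinarith [norm_nonneg (z - -x)]
    have hc2 : c ^ 2 < 2 * (1 - ε') / (1 + 3 * ε') := by
      have hq : Real.sqrt 2 * Real.sqrt ((1 - ε') / (1 + 3 * ε'))
          = Real.sqrt (2 * ((1 - ε') / (1 + 3 * ε'))) :=
        (Real.sqrt_mul (by norm_num) _).symm
      rw [hq] at hc
      have h := (Real.lt_sqrt hcpos).mp hc
      calc c ^ 2 < 2 * ((1 - ε') / (1 + 3 * ε')) := h
        _ = 2 * (1 - ε') / (1 + 3 * ε') := by ring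
    have hc2' : c ^ 2 * (1 + 3 * ε') < 2 * (1 - ε') := by
      rw [lt_div_iff₀ hd3] at hc2; exact hc2
    have hsq : 4 * ‖x‖ ^ 2 ≤ c ^ 2 * ‖z - -x‖ ^ 2 := by
      nlinarith [norm_nonneg (z - -x)]
    nlinarith [sq_nonneg c, hzq, hx2, hc2', hsq]
  calc r = S.card := hcard.symm
    _ ≤ T.card := Finset.card_le_card hST
end

section
/- Let S ⊆ ℝ^d satisfy the hypotheses of the previous statement with |S'| = r, let h ≥ 1 be an integer, and let S = { i·x : x ∈ S', i ∈ {1,…,h} }. For a query q = −h x with x ∈ S', the true furthest neighbor h x satisfies ‖h x − q‖₂ ≥ 2h√(1 − ε'), while every point y = j y' with y' ∈ S' \ {x} and 1 ≤ j ≤ h satisfies ‖y − q‖₂ ≤ √(2h²(1 + ε') + 4h²ε') = h√(2 + 6ε'). -/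
open Real RealInnerProductSpace

/-- Scaled copies of near-orthonormal points: for the query `q = −h·x` with `x ∈ S'`, the
point `h·x` is at distance at least `2h√(1 − ε')`, while every `j·y'` with `y' ∈ S' \ {x}`
and `1 ≤ j ≤ h` is at distance at most `√(2h²(1+ε') + 4h²ε') = h√(2 + 6ε')`. -/
theorem stmt_15 (d : ℕ) (ε' : ℝ) (hε0 : 0 < ε') (hε1 : ε' < 1)
    (S' : Finset (EuclideanSpace ℝ (Fin d)))
    (hnorm : ∀ x ∈ S', 1 - ε' ≤ ‖x‖ ^ 2 ∧ ‖x‖ ^ 2 ≤ 1 + ε')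
    (hdot : ∀ x ∈ S', ∀ y ∈ S', x ≠ y → ⟪x, y⟫ ≤ 2 * ε')
    (h : ℕ) (hh : 1 ≤ h) (x : EuclideanSpace ℝ (Fin d)) (hxS : x ∈ S') :
    2 * h * Real.sqrt (1 - ε') ≤ ‖(h : ℝ) • x - (-(h : ℝ) • x)‖ ∧
      (∀ y' ∈ S', y' ≠ x → ∀ j : ℕ, 1 ≤ j → j ≤ h →
        ‖(j : ℝ) • y' - (-(h : ℝ) • x)‖
          ≤ Real.sqrt (2 * h ^ 2 * (1 + ε') + 4 * h ^ 2 * ε')) ∧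
      Real.sqrt (2 * h ^ 2 * (1 + ε') + 4 * h ^ 2 * ε')
        = h * Real.sqrt (2 + 6 * ε') := by
  have hh1 : (1 : ℝ) ≤ (h : ℝ) := by exact_mod_cast hh
  have hhpos : (0 : ℝ) < (h : ℝ) := by linarith
  refine ⟨?_, ?_, ?_⟩
  · have : (h : ℝ) • x - (-(h : ℝ) • x) = (2 * h : ℝ) • x := by
      rw [neg_smul, sub_neg_eq_add]; module
    rw [this, norm_smul]
    have hx := (hnorm x hxS).1
    have hxn : Real.sqrt (1 - ε') ≤ ‖x‖ := by
      rw [show ‖x‖ = Real.sqrt (‖x‖ ^ 2) by rw [Real.sqrt_sq (norm_nonneg _)]]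
      exact Real.sqrt_le_sqrt hx
    have : ‖(2 * h : ℝ)‖ = 2 * h := by
      rw [Real.norm_eq_abs, abs_of_pos]; linarith
    rw [this]
    nlinarith [Real.sqrt_nonneg (1 - ε')]
  · intro y' hy' hne j hj1 hjh
    have hj1' : (1 : ℝ) ≤ (j : ℝ) := by exact_mod_cast hj1
    have hjh' : (j : ℝ) ≤ (h : ℝ) := by exact_mod_cast hjh
    rw [show (j : ℝ) • y' - (-(h : ℝ) • x) = (j : ℝ) • y' + (h : ℝ) • x by
      rw [neg_smul, sub_neg_eq_add]]
    rw [show ‖(j : ℝ) • y' + (h : ℝ) • x‖ =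
        Real.sqrt (‖(j : ℝ) • y' + (h : ℝ) • x‖ ^ 2) by
      rw [Real.sqrt_sq (norm_nonneg _)]]
    apply Real.sqrt_le_sqrt
    rw [norm_add_pow_two_real, norm_smul, norm_smul, real_inner_smul_left, real_inner_smul_right]
    have hy := (hnorm y' hy').2
    have hx := (hnorm x hxS).2
    have hd := hdot y' hy' x hxS hne
    rw [Real.norm_eq_abs, Real.norm_eq_abs, abs_of_pos hhpos,
      abs_of_pos (show (0:ℝ) < (j:ℝ) by linarith)]
    have hnx : 0 ≤ ‖x‖ := norm_nonneg _
    have hny : 0 ≤ ‖y'‖ := norm_nonneg _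
    have hjpos : (0:ℝ) < (j:ℝ) := by linarith
    have A : ((j:ℝ)*‖y'‖)^2 ≤ (h:ℝ)^2*(1+ε') := by
      nlinarith [mul_le_mul_of_nonneg_left hy (sq_nonneg (h:ℝ)),
        mul_le_mul hjh' hjh' hjpos.le hhpos.le, sq_nonneg ‖y'‖]
    have B : ((h:ℝ)*‖x‖)^2 ≤ (h:ℝ)^2*(1+ε') := by nlinarith
    have C : 2*((j:ℝ)*((h:ℝ)*⟪y', x⟫)) ≤ 4*(h:ℝ)^2*ε' := by
      have t1 : (j:ℝ)*(h:ℝ)*⟪y',x⟫ ≤ (j:ℝ)*(h:ℝ)*(2*ε') :=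
        mul_le_mul_of_nonneg_left hd (le_of_lt (mul_pos hjpos hhpos))
      have t2 : (j:ℝ)*(h:ℝ) ≤ (h:ℝ)*(h:ℝ) := mul_le_mul_of_nonneg_right hjh' hhpos.le
      nlinarith
    linarith
  · rw [show 2 * (h:ℝ) ^ 2 * (1 + ε') + 4 * h ^ 2 * ε' = (h:ℝ)^2 * (2 + 6*ε') by ring,
      Real.sqrt_mul (sq_nonneg _), Real.sqrt_sq hhpos.le]
end

section
/- For any φ > 0, e^{t²/2} t^{c²} = n/(2π)^{c²/2} with c > 1 implies (1/√(2π)) · (c/t − c³/t³) · e^{−t²/(2c²)} ≥ (1 − o(1)) · n^{−1/c²} as n → ∞. -/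
open Real Filter

/-! Raising the defining equation to the power `1/c²` gives `e^{t²/(2c²)} · t · √(2π) = n^{1/c²}`,
so the left-hand side equals `(c - c³/t²) · n^{-1/c²}` exactly. Since `t → ∞`, the factor
`c - c³/t²` tends to `c > 1`, so the inequality eventually holds even with `ε = 0`. -/

theorem exp_mul_sqrt_two_pi_eq_rpow_one_div {a s x : ℝ} (ha : 0 < a) (hs : 0 < s)
    (hx : 0 ≤ x) (h : exp (s ^ 2 / 2) * s ^ a = x / (2 * π) ^ (a / 2)) :
    exp (s ^ 2 / (2 * a)) * s * √(2 * π) = x ^ (1 / a) := by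
  have h2π : (0 : ℝ) < 2 * π := by positivity
  have h' := congrArg (· ^ (1 / a)) h
  have e1 : s ^ 2 / 2 * (1 / a) = s ^ 2 / (2 * a) := by field_simp
  have e2 : a / 2 * (1 / a) = 1 / 2 := by field_simp
  rw [mul_rpow (exp_pos _).le (rpow_nonneg hs.le _), ← exp_mul, ← rpow_mul hs.le,
    div_rpow hx (rpow_nonneg h2π.le _), ← rpow_mul h2π.le, mul_one_div_cancel ha.ne', rpow_one,
    e1, e2, ← sqrt_eq_rpow] at h'
  rw [h', div_mul_cancel₀ _ (sqrt_pos.2 h2π).ne']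

theorem tendsto_atTop_of_exp_mul_rpow_eq {a K : ℝ} (ha : 0 ≤ a) (hK : 0 < K) {t : ℕ → ℝ}
    (hpos : ∀ n, 1 ≤ n → 0 < t n)
    (heq : ∀ n, 1 ≤ n → exp (t n ^ 2 / 2) * t n ^ a = n / K) :
    Tendsto t atTop atTop := by
  refine tendsto_atTop.2 fun b => ?_
  set B := max b 1
  have hB : 0 < B := lt_max_of_lt_right one_pos
  filter_upwards [eventually_ge_atTop 1,
    (tendsto_natCast_atTop_atTop.atTop_div_const hK).eventually_gt_atTop
      (exp (B ^ 2 / 2) * B ^ a)] with n hn hlarge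
  refine (le_max_left b 1).trans (not_lt.1 fun hlt => hlarge.not_ge ?_)
  rw [← heq n hn]
  have h0 := hpos n hn
  gcongr

theorem one_div_sqrt_two_pi_mul_exp_neg_eq {c s x : ℝ} (hc : 0 < c) (hs : 0 < s) (hx : 0 < x)
    (h : exp (s ^ 2 / (2 * c ^ 2)) * s * √(2 * π) = x ^ (1 / c ^ 2)) :
    1 / √(2 * π) * (c / s - c ^ 3 / s ^ 3) * exp (-s ^ 2 / (2 * c ^ 2))
      = (c - c ^ 3 / s ^ 2) * x ^ (-(1 / c ^ 2)) := by
  have h2π : (0 : ℝ) < √(2 * π) := by positivity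
  rw [rpow_neg hx.le, ← h, neg_div, exp_neg]
  field_simp

/-- If `t n > 0` solves `e^{t²/2} t^{c²} = n/(2π)^{c²/2}` with `c > 1`, then
`(1/√(2π))·(c/t − c³/t³)·e^{−t²/(2c²)} ≥ (1 − o(1))·n^{−1/c²}` as `n → ∞`. -/
theorem stmt_19 (c : ℝ) (hc : 1 < c) (t : ℕ → ℝ) (hpos : ∀ n, 1 ≤ n → 0 < t n)
    (heq : ∀ n, 1 ≤ n →
      Real.exp ((t n) ^ 2 / 2) * (t n) ^ (c ^ 2 : ℝ)
        = (n : ℝ) / (2 * π) ^ ((c ^ 2 : ℝ) / 2)) :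
    ∃ ε : ℕ → ℝ, Tendsto ε atTop (nhds 0) ∧
      ∀ᶠ n in atTop,
        (1 - ε n) * (n : ℝ) ^ (-(1 / c ^ 2) : ℝ)
          ≤ (1 / Real.sqrt (2 * π)) * (c / t n - c ^ 3 / (t n) ^ 3) *
              Real.exp (-(t n) ^ 2 / (2 * c ^ 2)) := by
  have hc0 : 0 < c := one_pos.trans hc
  have ht : Tendsto t atTop atTop :=
    tendsto_atTop_of_exp_mul_rpow_eq (sq_nonneg c) (by positivity) hpos heq
  have hcorr : Tendsto (fun n => c ^ 3 / t n ^ 2) atTop (nhds 0) :=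
    tendsto_const_nhds.div_atTop ((tendsto_pow_atTop two_ne_zero).comp ht)
  refine ⟨0, tendsto_const_nhds, ?_⟩
  filter_upwards [eventually_ge_atTop 1, hcorr.eventually (gt_mem_nhds (sub_pos.2 hc))]
    with n hn hsmall
  have hn0 : (0 : ℝ) < n := by exact_mod_cast hn
  rw [one_div_sqrt_two_pi_mul_exp_neg_eq hc0 (hpos n hn) hn0
    (exp_mul_sqrt_two_pi_eq_rpow_one_div (by positivity) (hpos n hn) hn0.le (heq n hn))]
  refine mul_le_mul_of_nonneg_right ?_ (rpow_nonneg hn0.le _)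
  simp only [Pi.zero_apply, sub_zero]
  linarith
end
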